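/- For every integer m ≥ 1 and every r with mℓ − ℓ ≤ r ≤ mℓ, the coefficient of uʳ in tr E(u)ᵐ belongs to the center of the universal enveloping algebra U((𝔤𝔩_N)_ℓ). (Remark 3.2, the 𝔤𝔩_N version of Proposition 3.1.) -/

import Mathlib

/- Context: 𝔤𝔩_N(ℂ) = Mat_N(ℂ) with commutator bracket, E_{ij} elementary matrices;
(𝔤𝔩_N)_ℓ = 𝔤𝔩_N ⊗ ℂ[v]/(v^{ℓ+1}) the Takiff algebra, E^{(r)}_{ij} = E_{ij} ⊗ vʳ,
E(u) the N×N matrix over U((𝔤𝔩_N)_ℓ)[u] with entries ∑_{r=0}^ℓ ι(E^{(r)}_{ij})uʳ. -/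

open TensorProduct

attribute [local instance 100] LieRing.ofAssociativeRing

/-- The truncated polynomial ring `ℂ[v]/(v^{ℓ+1})`. -/
abbrev TruncPoly (ℓ : ℕ) : Type :=
  Polynomial ℂ ⧸ Ideal.span {(Polynomial.X : Polynomial ℂ) ^ (ℓ + 1)}

/-- The image of `vʳ` in `ℂ[v]/(v^{ℓ+1})`. -/
noncomputable def vpow (ℓ r : ℕ) : TruncPoly ℓ :=
  Ideal.Quotient.mk _ (Polynomial.X ^ r)

/-- A base-changed Lie algebra is also a Lie algebra over the base field. -/
noncomputable instance instLieAlgebraCBaseChange {g : Type} [LieRing g] [LieAlgebra ℂ g]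
    {A : Type} [CommRing A] [Algebra ℂ A] : LieAlgebra ℂ (A ⊗[ℂ] g) where
  lie_smul t x y := by
    rw [← algebraMap_smul A t y, ← algebraMap_smul A t ⁅x, y⁆]
    exact (LieAlgebra.ExtendScalars.instLieAlgebra ℂ A g).lie_smul _ x y

/-- The matrix `E(u)` over `U((𝔤𝔩_N)_ℓ)[u]` with entries `∑_{r=0}^ℓ ι(E_{ij} ⊗ vʳ)·uʳ`. -/
noncomputable def glEMat (N ℓ : ℕ) :
    Matrix (Fin N) (Fin N)
      (Polynomial (UniversalEnvelopingAlgebra ℂ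
        (TruncPoly ℓ ⊗[ℂ] Matrix (Fin N) (Fin N) ℂ))) :=
  Matrix.of fun i j => ∑ r : Fin (ℓ + 1),
    Polynomial.C (UniversalEnvelopingAlgebra.ι ℂ
      (vpow ℓ (r : ℕ) ⊗ₜ Matrix.single i j (1 : ℂ))) * Polynomial.X ^ (r : ℕ)

/-! Fix a generator `x = E_{kl} ⊗ vˢ` of the Takiff algebra. Its commutator with `E(u)` is
`[e_{lk}, Eˢ(u)]`, where `uˢ Eˢ(u) = E(u) - L(u)` and `L(u)` has degree `< s`. Telescoping gives
`uˢ [x, E(u)ᵐ] = [e_{lk}, E(u)ᵐ] - ∑ₜ E(u)ᵗ [e_{lk}, L(u)] E(u)^{m-1-t}`. The first term is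
traceless and the sum has degree `< (m-1)ℓ + s`, so comparing coefficients of `u^{r+s}` shows that
`x` commutes with the coefficient of `uʳ` in `tr E(u)ᵐ` once `r ≥ (m-1)ℓ`. The `E_{ij} ⊗ vˢ` span
the Takiff algebra, so they generate its enveloping algebra. -/

open Polynomial Finset

theorem lie_pow_eq_sum {R : Type*} [Ring R] (a b : R) (m : ℕ) :
    ⁅a, b ^ m⁆ = ∑ t ∈ range m, b ^ t * ⁅a, b⁆ * b ^ (m - 1 - t) := by
  induction m with
  | zero => simp [Ring.lie_def]
  | succ m ih =>
    have hsplit : ⁅a, b ^ (m + 1)⁆ = ⁅a, b ^ m⁆ * b + b ^ m * ⁅a, b⁆ := by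
      simp only [Ring.lie_def, pow_succ]
      noncomm_ring
    rw [hsplit, sum_range_succ, Nat.add_sub_cancel, Nat.sub_self, pow_zero, mul_one, ih, sum_mul]
    congr 1
    refine sum_congr rfl fun t ht => ?_
    rw [mul_assoc, ← pow_succ, show m - 1 - t + 1 = m - t by grind]

theorem mul_lie_pow_eq_sub_sum {R : Type*} [Ring R] {z x y e d : R} (hz : Commute z e)
    (h : z * ⁅x, e⁆ = ⁅y, e⁆ - ⁅y, d⁆) (m : ℕ) :
    z * ⁅x, e ^ m⁆ = ⁅y, e ^ m⁆ - ∑ t ∈ range m, e ^ t * ⁅y, d⁆ * e ^ (m - 1 - t) := by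
  rw [lie_pow_eq_sum, lie_pow_eq_sum y, mul_sum, ← sum_sub_distrib]
  refine sum_congr rfl fun t _ => ?_
  rw [← mul_assoc, ← mul_assoc, (hz.pow_right t).eq, mul_assoc (e ^ t), h, mul_sub, sub_mul]

theorem Polynomial.lie_C_mul_X_pow {R : Type*} [Ring R] (a b : R) (q : ℕ) :
    ⁅C a, C b * X ^ q⁆ = C ⁅a, b⁆ * X ^ q := by
  rw [Ring.lie_def, Ring.lie_def, ← mul_assoc, mul_assoc (C b), (commute_X_pow (C a) q).eq,
    ← mul_assoc, ← map_mul, ← map_mul, map_sub, sub_mul]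

namespace Matrix

section Ring

variable {n A : Type*} [Fintype n] [DecidableEq n] [Ring A]

theorem lie_scalar_apply (a : A) (M : Matrix n n A) (i j : n) :
    ⁅scalar n a, M⁆ i j = ⁅a, M i j⁆ := by
  simp [Ring.lie_def, scalar_apply]

theorem trace_lie_scalar (a : A) (M : Matrix n n A) : ⁅scalar n a, M⁆.trace = ⁅a, M.trace⁆ := by
  simp only [trace, diag, lie_scalar_apply, lie_sum]

theorem trace_lie_single_one (k l : n) (M : Matrix n n A) :
    ⁅single k l (1 : A), M⁆.trace = 0 := by
  simp [Ring.lie_def, trace_single_mul, trace_mul_single]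

theorem lie_single_one_single_one (k l i j : n) :
    ⁅single k l (1 : A), single i j (1 : A)⁆ =
      (if l = i then single k j 1 else 0) - (if j = k then single i l 1 else 0) := by
  rw [Ring.lie_def]
  congr 1 <;> split_ifs with h <;> simp [h, single_mul_single_of_ne]

theorem lie_single_one_apply (k l : n) (M : Matrix n n A) (i j : n) :
    ⁅single k l (1 : A), M⁆ i j = (if k = i then M l j else 0) - (if j = l then M i k else 0) := by
  rw [Ring.lie_def, sub_apply]
  congr 1 <;> split_ifs with h <;> simp [h, Ne.symm]

end Ring

section Degree

variable {n A : Type*} [Ring A]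

theorem degree_single_one_apply_le [DecidableEq n] (k l i j : n) :
    (single k l (1 : A[X]) i j).degree ≤ 0 := by
  rw [single_apply]
  split_ifs <;> simp

variable [Fintype n]

theorem degree_trace_le {a : WithBot ℕ} {M : Matrix n n A[X]} (hM : ∀ i j, (M i j).degree ≤ a) :
    M.trace.degree ≤ a :=
  (degree_sum_le _ _).trans (Finset.sup_le fun i _ => hM i i)

theorem degree_mul_apply_le {a b : WithBot ℕ} {M P : Matrix n n A[X]}
    (hM : ∀ i j, (M i j).degree ≤ a) (hP : ∀ i j, (P i j).degree ≤ b) (i j : n) :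
    ((M * P) i j).degree ≤ a + b :=
  (degree_sum_le _ _).trans <| Finset.sup_le fun p _ =>
    (degree_mul_le _ _).trans (add_le_add (hM i p) (hP p j))

theorem degree_pow_apply_le [DecidableEq n] {a : ℕ} {M : Matrix n n A[X]}
    (hM : ∀ i j, (M i j).degree ≤ a) (t : ℕ) (i j : n) : ((M ^ t) i j).degree ≤ (t * a : ℕ) := by
  induction t generalizing i j with
  | zero =>
    rw [pow_zero, one_apply]
    split_ifs <;> simp
  | succ t ih =>
    rw [pow_succ, Nat.succ_mul, Nat.cast_add]
    exact degree_mul_apply_le ih hM i j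

theorem degree_trace_sum_pow_mul_pow_le [DecidableEq n] {a : ℕ} {b : WithBot ℕ}
    {E D : Matrix n n A[X]} (hE : ∀ i j, (E i j).degree ≤ a) (hD : ∀ i j, (D i j).degree ≤ b)
    (m : ℕ) :
    (∑ t ∈ range m, E ^ t * D * E ^ (m - 1 - t)).trace.degree ≤ ((m - 1) * a : ℕ) + b := by
  refine degree_trace_le fun i j => ?_
  rw [sum_apply]
  refine (degree_sum_le _ _).trans (Finset.sup_le fun t ht => ?_)
  have hsplit : t * a + (m - 1 - t) * a = (m - 1) * a := by
    rw [← add_mul]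
    grind
  calc _ ≤ (t * a : ℕ) + b + ((m - 1 - t) * a : ℕ) :=
        degree_mul_apply_le (degree_mul_apply_le (degree_pow_apply_le hE t) hD)
          (degree_pow_apply_le hE _) i j
    _ = ((m - 1) * a : ℕ) + b := by rw [← hsplit, Nat.cast_add]; abel

theorem degree_lie_single_one_apply_le [DecidableEq n] {b : WithBot ℕ} {M : Matrix n n A[X]}
    (hM : ∀ i j, (M i j).degree ≤ b) (k l i j : n) :
    (⁅single k l (1 : A[X]), M⁆ i j).degree ≤ b := by
  rw [Ring.lie_def, sub_apply]
  refine (degree_sub_le _ _).trans (max_le ?_ ?_)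
  · simpa using degree_mul_apply_le (degree_single_one_apply_le k l) hM i j
  · simpa using degree_mul_apply_le hM (degree_single_one_apply_le k l) i j

end Degree

variable {n A : Type*} [Fintype n] [DecidableEq n] [Ring A]

theorem commute_coeff_trace_pow {c : A} {k l : n} {ℓ s : ℕ} {E G L : Matrix n n A[X]}
    (hE : ∀ i j, (E i j).degree ≤ ℓ) (hL : ∀ i j, (L i j).degree < s)
    (hG : scalar n (X ^ s) * G = E - L) (hc : ⁅scalar n (C c), E⁆ = ⁅single l k (1 : A[X]), G⁆)
    {m r : ℕ} (hr : (m - 1) * ℓ ≤ r) : Commute c ((E ^ m).trace.coeff r) := by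
  set S : Matrix n n A[X] := single l k 1
  set T := ∑ t ∈ range m, E ^ t * ⁅S, L⁆ * E ^ (m - 1 - t)
  have hZ : ∀ M : Matrix n n A[X], Commute (scalar n (X ^ s)) M :=
    scalar_commute _ fun p => (commute_X p).pow_left s
  have hcEm : scalar n (X ^ s) * ⁅scalar n (C c), E ^ m⁆ = ⁅S, E ^ m⁆ - T := by
    refine mul_lie_pow_eq_sub_sum (hZ E) ?_ m
    rw [hc, ← lie_sub, ← hG, Ring.lie_def, Ring.lie_def, mul_sub, ← mul_assoc, (hZ S).eq,
      mul_assoc, mul_assoc]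
  have htrace : X ^ s * ⁅C c, (E ^ m).trace⁆ = -T.trace := by
    have := congrArg trace hcEm
    rwa [trace_sub, trace_lie_single_one, zero_sub, scalar_apply, ← smul_eq_diagonal_mul,
      trace_smul, smul_eq_mul, trace_lie_scalar] at this
  -- the entrywise degree lemmas need a uniform non-strict bound on `L`
  set β := univ.sup fun p : n × n => (L p.1 p.2).degree
  have hLβ : ∀ i j, (L i j).degree ≤ β := fun i j =>
    le_sup (f := fun p : n × n => (L p.1 p.2).degree) (mem_univ (i, j))
  have hβ : β < s := (Finset.sup_lt_iff (WithBot.bot_lt_coe s)).2 fun p _ => hL p.1 p.2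
  have hT : T.trace.degree < (r + s : ℕ) := by
    have hTβ := degree_trace_sum_pow_mul_pow_le hE (degree_lie_single_one_apply_le hLβ l k) m
    refine hTβ.trans_lt ?_
    rw [Nat.cast_add]
    exact WithBot.add_lt_add_of_le_of_lt WithBot.coe_ne_bot (by exact_mod_cast hr) hβ
  simpa only [coeff_X_pow_mul, coeff_neg, coeff_eq_zero_of_degree_lt hT, neg_zero, Ring.lie_def,
    coeff_sub, coeff_C_mul, coeff_mul_C, sub_eq_zero, commute_iff_eq] using
    congrArg (coeff · (r + s)) htrace

end Matrix

namespace UniversalEnvelopingAlgebra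

variable {R L : Type*} [CommRing R] [LieRing L] [LieAlgebra R L]

theorem adjoin_range_ι : Algebra.adjoin R (Set.range (ι R : L → _)) = ⊤ := by
  have hrange : Set.range (ι R : L → UniversalEnvelopingAlgebra R L) =
      mkAlgHom R L '' Set.range (TensorAlgebra.ι R) := by
    rw [← Set.range_comp]; rfl
  rw [hrange, ← AlgHom.map_adjoin, TensorAlgebra.adjoin_range_ι, Algebra.map_top,
    AlgHom.range_eq_top]
  exact RingCon.mkₐ_surjective _

theorem mem_center_of_commute_ι {s : Set L} (hs : Submodule.span R s = ⊤)
    {z : UniversalEnvelopingAlgebra R L} (h : ∀ x ∈ s, Commute (ι R x) z) :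
    z ∈ Subalgebra.center R (UniversalEnvelopingAlgebra R L) := by
  have hadjoin : Algebra.adjoin R (ι R '' s) = ⊤ := by
    refine eq_top_iff.2 (adjoin_range_ι (R := R) (L := L) ▸ Algebra.adjoin_le ?_)
    rintro _ ⟨x, rfl⟩
    have hx : ι R x ∈ Submodule.span R (ι R '' s) := by
      rw [show ⇑(ι R) = ⇑(ι R : L →ₗ⁅R⁆ _).toLinearMap from rfl, Submodule.span_image, hs,
        Submodule.map_top]
      exact LinearMap.mem_range_self _ x
    exact Algebra.span_le_adjoin R _ hx
  have hcent : Algebra.adjoin R (ι R '' s) ≤ Subalgebra.centralizer R {z} :=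
    Algebra.adjoin_le (by rintro _ ⟨x, hx, rfl⟩ z rfl; exact (h x hx).eq.symm)
  rw [Subalgebra.mem_center_iff]
  intro b
  exact (hcent (hadjoin ▸ Algebra.mem_top : b ∈ Algebra.adjoin R (ι R '' s)) z rfl).symm

end UniversalEnvelopingAlgebra

section Takiff

open UniversalEnvelopingAlgebra Matrix

theorem vpow_mul (ℓ a b : ℕ) : vpow ℓ a * vpow ℓ b = vpow ℓ (a + b) := by
  simp only [vpow, ← map_mul, ← pow_add]

theorem vpow_eq_zero {ℓ q : ℕ} (h : ℓ < q) : vpow ℓ q = 0 := by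
  rw [vpow, Ideal.Quotient.eq_zero_iff_mem, Ideal.mem_span_singleton]
  exact pow_dvd_pow _ h

theorem span_range_vpow (ℓ : ℕ) : Submodule.span ℂ (Set.range (vpow ℓ)) = ⊤ := by
  have hrange : Set.range (vpow ℓ) =
      (Ideal.Quotient.mkₐ ℂ _).toLinearMap '' Set.range (monomial · (1 : ℂ)) := by
    rw [← Set.range_comp]
    ext
    simp [vpow, X_pow_eq_monomial]
  rw [hrange, Submodule.span_image,
    ← Polynomial.coe_basisMonomials, (basisMonomials ℂ).span_eq, Submodule.map_top,
    LinearMap.range_eq_top]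
  exact Ideal.Quotient.mk_surjective

theorem span_vpow_tmul_single_eq_top (N ℓ : ℕ) :
    Submodule.span ℂ (Set.image2 (· ⊗ₜ[ℂ] ·) (Set.range (vpow ℓ))
      (Set.range fun p : Fin N × Fin N => single p.1 p.2 (1 : ℂ))) = ⊤ := by
  have hsingle : (fun p : Fin N × Fin N => single p.1 p.2 (1 : ℂ)) = stdBasis ℂ (Fin N) (Fin N) :=
    funext fun p => (stdBasis_eq_single ℂ p.1 p.2).symm
  have := Submodule.map₂_span_span ℂ (TensorProduct.mk ℂ _ _) (Set.range (vpow ℓ))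
    (Set.range (stdBasis ℂ (Fin N) (Fin N)))
  rw [span_range_vpow, (stdBasis ℂ _ _).span_eq, map₂_mk_top_top_eq_top] at this
  rw [hsingle]
  exact this.symm

variable {N : ℕ}

abbrev TakiffU (N ℓ : ℕ) : Type :=
  UniversalEnvelopingAlgebra ℂ (TruncPoly ℓ ⊗[ℂ] Matrix (Fin N) (Fin N) ℂ)

noncomputable def takiffE (ℓ q : ℕ) (i j : Fin N) : TakiffU N ℓ :=
  ι ℂ (vpow ℓ q ⊗ₜ single i j (1 : ℂ))

theorem takiffE_eq_zero {ℓ q : ℕ} (h : ℓ < q) (i j : Fin N) : takiffE ℓ q i j = 0 := by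
  rw [takiffE, vpow_eq_zero h, TensorProduct.zero_tmul, map_zero]

theorem lie_takiffE (ℓ s q : ℕ) (k l i j : Fin N) :
    ⁅takiffE ℓ s k l, takiffE ℓ q i j⁆ = (if l = i then takiffE ℓ (q + s) k j else 0) -
      (if j = k then takiffE ℓ (q + s) i l else 0) := by
  rw [takiffE, takiffE, ← LieHom.map_lie, LieAlgebra.ExtendScalars.bracket_tmul, vpow_mul,
    add_comm s q, lie_single_one_single_one, TensorProduct.tmul_sub, map_sub]
  congr 1 <;> split_ifs <;> simp [takiffE]

end Takiff

section TakiffMatrix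

open Matrix

variable (N ℓ : ℕ)

noncomputable def glEMatTail (s : ℕ) : Matrix (Fin N) (Fin N) (TakiffU N ℓ)[X] :=
  of fun i j => ∑ q : Fin (ℓ + 1), C (takiffE ℓ (q + s) i j) * X ^ (q : ℕ)

noncomputable def glEMatHead (s : ℕ) : Matrix (Fin N) (Fin N) (TakiffU N ℓ)[X] :=
  of fun i j => ∑ q : Fin s, C (takiffE ℓ q i j) * X ^ (q : ℕ)

theorem glEMat_eq_glEMatTail_zero : glEMat N ℓ = glEMatTail N ℓ 0 := rfl

variable {N ℓ}

theorem degree_glEMat_apply_le (i j : Fin N) : (glEMat N ℓ i j).degree ≤ ℓ := by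
  rw [glEMat, of_apply]
  exact (degree_sum_le _ _).trans <| Finset.sup_le fun q _ =>
    (degree_C_mul_X_pow_le _ _).trans (by exact_mod_cast Nat.lt_succ_iff.1 q.2)

theorem degree_glEMatHead_apply_lt (s : ℕ) (i j : Fin N) : (glEMatHead N ℓ s i j).degree < s :=
  degree_sum_fin_lt _

theorem X_pow_mul_glEMatTail (s : ℕ) :
    scalar (Fin N) (X ^ s) * glEMatTail N ℓ s = glEMat N ℓ - glEMatHead N ℓ s := by
  ext i j : 1
  set f : ℕ → (TakiffU N ℓ)[X] := fun p => C (takiffE ℓ p i j) * X ^ p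
  have htail : ∑ q ∈ range s, f (ℓ + 1 + q) = 0 :=
    sum_eq_zero fun q _ => by simp [f, takiffE_eq_zero (by omega : ℓ < ℓ + 1 + q)]
  have hsplit : ∑ q ∈ range s, f q + ∑ q ∈ range (ℓ + 1), f (s + q) = ∑ q ∈ range (ℓ + 1), f q := by
    rw [← sum_range_add, add_comm s, sum_range_add, htail, add_zero]
  rw [Matrix.sub_apply, scalar_apply, diagonal_mul, glEMat_eq_glEMatTail_zero]
  simp only [glEMatTail, glEMatHead, of_apply, add_zero, mul_sum]
  rw [Fin.sum_univ_eq_sum_range f, Fin.sum_univ_eq_sum_range f, ← hsplit, add_sub_cancel_left]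
  rw [Fin.sum_univ_eq_sum_range (fun q => X ^ s * (C (takiffE ℓ (q + s) i j) * X ^ q))]
  refine sum_congr rfl fun q _ => ?_
  rw [add_comm q s, ← mul_assoc, (commute_X_pow _ s).eq, mul_assoc, ← pow_add]

theorem lie_scalar_glEMat (s : ℕ) (k l : Fin N) :
    ⁅scalar (Fin N) (C (takiffE ℓ s k l)), glEMat N ℓ⁆ =
      ⁅single l k (1 : (TakiffU N ℓ)[X]), glEMatTail N ℓ s⁆ := by
  ext i j : 1
  rw [lie_scalar_apply, lie_single_one_apply, glEMat_eq_glEMatTail_zero]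
  simp only [glEMatTail, of_apply, add_zero, lie_sum, lie_C_mul_X_pow, lie_takiffE, map_sub,
    sub_mul, sum_sub_distrib]
  congr 1 <;> split_ifs <;> simp

end TakiffMatrix

theorem commute_takiffE_coeff_trace_glEMat_pow {N ℓ : ℕ} (s : ℕ) (k l : Fin N) {m r : ℕ}
    (hr : (m - 1) * ℓ ≤ r) : Commute (takiffE ℓ s k l) ((glEMat N ℓ ^ m).trace.coeff r) :=
  Matrix.commute_coeff_trace_pow degree_glEMat_apply_le (degree_glEMatHead_apply_lt s)
    (X_pow_mul_glEMatTail s) (lie_scalar_glEMat s k l) hr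

theorem takiff_gl_theta_central_general (N : ℕ) (ℓ : ℕ)
    (m r : ℕ) (hr1 : m * ℓ - ℓ ≤ r) :
    (((glEMat N ℓ) ^ m).trace).coeff r ∈
      Subalgebra.center ℂ
        (UniversalEnvelopingAlgebra ℂ (TruncPoly ℓ ⊗[ℂ] Matrix (Fin N) (Fin N) ℂ)) := by
  refine UniversalEnvelopingAlgebra.mem_center_of_commute_ι (span_vpow_tmul_single_eq_top N ℓ) ?_
  rintro _ ⟨_, ⟨q, rfl⟩, _, ⟨⟨i, j⟩, rfl⟩, rfl⟩
  exact commute_takiffE_coeff_trace_glEMat_pow q i j (by rwa [Nat.sub_one_mul])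

/-- for `m ≥ 1` and `mℓ − ℓ ≤ r ≤ mℓ`, the coefficient of `uʳ` in
`tr E(u)ᵐ` is central in `U((𝔤𝔩_N)_ℓ)`. -/
theorem takiff_gl_theta_central (N : ℕ) (hN : 1 ≤ N) (ℓ : ℕ) (hℓ : 1 ≤ ℓ)
    (m r : ℕ) (hm : 1 ≤ m) (hr1 : m * ℓ - ℓ ≤ r) (hr2 : r ≤ m * ℓ) :
    (((glEMat N ℓ) ^ m).trace).coeff r ∈
      Subalgebra.center ℂ
        (UniversalEnvelopingAlgebra ℂ (TruncPoly ℓ ⊗[ℂ] Matrix (Fin N) (Fin N) ℂ)) :=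
  takiff_gl_theta_central_general N ℓ m r hr1
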